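/- The function 𝔑 counting minimal atomic decompositions is monotone on the partition lattice: if π ≤ π' in refinement order then 𝔑(π) ≤ 𝔑(π'). -/

import Mathlib

variable {X : Type*} [Fintype X] [DecidableEq X]

/-- The atom of the partition lattice whose only nonsingleton block is `{x, y}`. -/
def pairSetoid (x y : X) : Setoid X where
  r a b := a = b ∨ (a = x ∧ b = y) ∨ (a = y ∧ b = x)
  iseqv := by
    refine ⟨fun a => Or.inl rfl, ?_, ?_⟩
    · intro a b h; tauto
    · intro a b c h1 h2; aesop

/-- `S` is an atomic decomposition of the partition `π`. -/
def IsAtomicDecomp (π : Setoid X) (S : Set (Setoid X)) : Prop :=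
  (∀ a ∈ S, IsAtom a) ∧ sSup S = π

/-- `S` is a minimal atomic decomposition of `π`. -/
def IsMinAtomicDecomp (π : Setoid X) (S : Set (Setoid X)) : Prop :=
  IsAtomicDecomp π S ∧ ∀ T ⊂ S, ¬ IsAtomicDecomp π T

/-- `𝔑 π`: the number of minimal atomic decompositions of `π`. -/
noncomputable def numMinDecomp (π : Setoid X) : ℕ :=
  {S | IsMinAtomicDecomp π S}.ncard

/-- The graph on `X` whose edges are the nonsingleton blocks of the atoms in `S`. -/
def atomGraph (S : Set (Setoid X)) : SimpleGraph X where
  Adj a b := a ≠ b ∧ pairSetoid a b ∈ S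
  symm := by
    constructor
    intro a b ⟨h1, h2⟩
    refine ⟨h1.symm, ?_⟩
    have h : pairSetoid b a = pairSetoid a b := by
      apply Setoid.ext; intro u v
      show _ ∨ _ ↔ _ ∨ _; tauto
    rw [h]; exact h2
  loopless := by constructor; intro a ⟨h, _⟩; exact h rfl

/-!
Fix `π ≤ π'` and, in each `π'`-class, a hub `π`-class; let `E` be the atoms joining the
representative of every other `π`-class to the representative of its hub. Then `S ↦ S ∪ E` maps
the minimal atomic decompositions of `π` injectively to those of `π'`: no atom of `E` lies below
`π`, and `π ⊔ ⋁ E = π'`. As for minimality, removing an atom of `E` cuts its `π`-class off from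
the hub, while removing an atom of `S` splits a `π`-class into two parts, one of which avoids the
representative and is therefore touched by no atom of `E`.
-/

instance {α : Type*} [Finite α] : Finite (Setoid α) :=
  Finite.of_injective (fun s : Setoid α => (⇑s : α → α → Prop))
    fun _ _ h => Setoid.ext fun x y => Iff.of_eq (congrFun₂ h x y)

section General

variable {α : Type*}

section MinAtomicDecomp

variable {π : Setoid α} {S : Set (Setoid α)}

theorem IsAtomicDecomp.le {s : Setoid α} (hS : IsAtomicDecomp π S) (hs : s ∈ S) : s ≤ π :=
  hS.2 ▸ le_sSup hs

theorem isMinAtomicDecomp_iff :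
    IsMinAtomicDecomp π S ↔ IsAtomicDecomp π S ∧ ∀ s ∈ S, sSup (S \ {s}) ≠ π := by
  refine ⟨fun ⟨hS, hmin⟩ => ⟨hS, fun s hs hsup => ?_⟩, fun ⟨hS, hmin⟩ => ⟨hS, ?_⟩⟩
  · exact hmin _ (Set.sdiff_singleton_ssubset.2 hs) ⟨fun a ha => hS.1 a ha.1, hsup⟩
  · rintro T hTS ⟨-, hT⟩
    obtain ⟨s, hs, hsT⟩ := Set.exists_of_ssubset hTS
    refine hmin s hs (le_antisymm ?_ ?_)
    · exact hS.2 ▸ sSup_le_sSup Set.sdiff_subset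
    · exact hT ▸ sSup_le_sSup fun t ht => ⟨hTS.subset ht, fun h => hsT (h ▸ ht)⟩

end MinAtomicDecomp

noncomputable def Setoid.rep (ρ : Setoid α) (u : α) : α := (Quotient.mk ρ u).out

namespace Setoid

variable {ρ : Setoid α} {u v : α}

theorem rel_rep (ρ : Setoid α) (u : α) : ρ u (ρ.rep u) :=
  Quotient.exact (Quotient.out_eq (Quotient.mk ρ u)).symm

theorem rep_eq_rep_iff : ρ.rep u = ρ.rep v ↔ ρ u v :=
  ⟨fun h => ρ.trans' (h ▸ ρ.rel_rep u) (ρ.symm' (ρ.rel_rep v)),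
    fun h => congrArg Quotient.out (Quotient.sound h)⟩

theorem rep_rep (ρ : Setoid α) (u : α) : ρ.rep (ρ.rep u) = ρ.rep u :=
  rep_eq_rep_iff.2 (ρ.symm' (ρ.rel_rep u))

theorem eq_of_rel_of_mem_range_rep {a b : α} (ha : a ∈ Set.range ρ.rep)
    (hb : b ∈ Set.range ρ.rep) (hab : ρ a b) : a = b := by
  obtain ⟨u, rfl⟩ := ha
  obtain ⟨v, rfl⟩ := hb
  simpa only [rep_rep] using rep_eq_rep_iff.2 hab

end Setoid

variable [DecidableEq α]

theorem pairSetoid_le_iff {x y : α} {ρ : Setoid α} : pairSetoid x y ≤ ρ ↔ ρ x y := by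
  refine ⟨fun h => h (Or.inr (Or.inl ⟨rfl, rfl⟩)), fun h a b hab => ?_⟩
  rcases hab with rfl | ⟨rfl, rfl⟩ | ⟨rfl, rfl⟩
  exacts [ρ.refl' a, h, ρ.symm' h]

theorem pairSetoid_isAtom {x y : α} (hxy : x ≠ y) : IsAtom (pairSetoid x y) := by
  refine ⟨fun h => hxy ?_, fun b hb => ?_⟩
  · have hrel : pairSetoid x y x y := Or.inr (Or.inl ⟨rfl, rfl⟩)
    rwa [h, Setoid.bot_def] at hrel
  · have hbxy : ¬ b x y := fun h => hb.not_ge (pairSetoid_le_iff.2 h)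
    refine le_antisymm (fun u v huv => ?_) bot_le
    rw [Setoid.bot_def]
    rcases hb.le huv with h | ⟨rfl, rfl⟩ | ⟨rfl, rfl⟩
    exacts [h, absurd huv hbxy, absurd (b.symm' huv) hbxy]

theorem pairSetoid_le_ker_iff {β : Type*} {x y : α} {f : α → β} :
    pairSetoid x y ≤ Setoid.ker f ↔ f x = f y :=
  pairSetoid_le_iff.trans Setoid.ker_def

theorem eq_of_le_sup_sSup_of_pairs_in_transversal {σ π : Setoid α} {R : Set α}
    {E : Set (Setoid α)} (hR : ∀ a ∈ R, ∀ b ∈ R, π a b → a = b)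
    (hE : ∀ e ∈ E, ∃ a ∈ R, ∃ b ∈ R, e = pairSetoid a b) (hσ : σ ≤ π)
    (hπ : π ≤ σ ⊔ sSup E) : σ = π := by
  refine le_antisymm hσ fun u v huv => by_contra fun hσuv => ?_
  -- The cut `{w | σ w c}` separates `u` from `v`, and no atom of `E` crosses it.
  obtain ⟨c, hcR, hc⟩ : ∃ c, (∀ a ∈ R, ¬ σ a c) ∧ ¬ (σ u c ↔ σ v c) := by
    by_cases hu : ∃ a ∈ R, σ a u
    · obtain ⟨a, ha, hau⟩ := hu
      refine ⟨v, fun b hb hbv => hσuv ?_, fun h => hσuv (h.2 (σ.refl' v))⟩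
      have hab : a = b := hR a ha b hb (π.trans' (hσ hau) (π.trans' huv (π.symm' (hσ hbv))))
      exact σ.trans' (σ.symm' hau) (hab ▸ hbv)
    · push Not at hu
      exact ⟨u, hu, fun h => hσuv (σ.symm' (h.1 (σ.refl' u)))⟩
  have hcut : σ ⊔ sSup E ≤ Setoid.ker fun w => σ w c := by
    refine sup_le (fun w w' hww' => Setoid.ker_def.2 (propext ⟨?_, ?_⟩)) (sSup_le ?_)
    · exact σ.trans' (σ.symm' hww')
    · exact σ.trans' hww'
    · rintro e he
      obtain ⟨a, ha, b, hb, rfl⟩ := hE e he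
      exact pairSetoid_le_ker_iff.2 (propext (iff_of_false (hcR a ha) (hcR b hb)))
  exact hc (Iff.of_eq (Setoid.ker_def.1 (hcut (hπ huv))))

def bridgeAtoms (π π' : Setoid α) : Set (Setoid α) :=
  {e | ∃ d, π.rep d ≠ π.rep (π'.rep d) ∧ e = pairSetoid (π.rep d) (π.rep (π'.rep d))}

section Bridge

variable {π π' e : Setoid α}

theorem isAtom_of_mem_bridgeAtoms (he : e ∈ bridgeAtoms π π') : IsAtom e := by
  obtain ⟨d, hd, rfl⟩ := he
  exact pairSetoid_isAtom hd

theorem le_of_mem_bridgeAtoms (h : π ≤ π') (he : e ∈ bridgeAtoms π π') : e ≤ π' := by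
  obtain ⟨d, -, rfl⟩ := he
  refine pairSetoid_le_iff.2 (π'.trans' (π'.symm' (h (π.rel_rep d))) ?_)
  exact π'.trans' (π'.rel_rep d) (h (π.rel_rep _))

theorem not_le_of_mem_bridgeAtoms (he : e ∈ bridgeAtoms π π') : ¬ e ≤ π := by
  obtain ⟨d, hd, rfl⟩ := he
  intro hle
  apply hd
  simpa only [Setoid.rep_rep] using Setoid.rep_eq_rep_iff.2 (pairSetoid_le_iff.1 hle)

theorem sup_sSup_bridgeAtoms (h : π ≤ π') : π ⊔ sSup (bridgeAtoms π π') = π' := by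
  refine le_antisymm (sup_le h (sSup_le fun e he => le_of_mem_bridgeAtoms h he)) ?_
  set τ := π ⊔ sSup (bridgeAtoms π π')
  have hhub : ∀ u, τ u (π.rep (π'.rep u)) := by
    intro u
    have hu : τ u (π.rep u) := le_sup_left (α := Setoid α) (π.rel_rep u)
    by_cases hd : π.rep u = π.rep (π'.rep u)
    · exact hd ▸ hu
    · refine τ.trans' hu (le_sup_right (α := Setoid α) ?_)
      exact pairSetoid_le_iff.1 (le_sSup ⟨u, hd, rfl⟩)
  intro u v huv
  have hv := hhub v
  rw [← Setoid.rep_eq_rep_iff.2 huv] at hv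
  exact τ.trans' (hhub u) (τ.symm' hv)

theorem sup_sSup_bridgeAtoms_diff_ne (h : π ≤ π') (he : e ∈ bridgeAtoms π π') :
    π ⊔ sSup (bridgeAtoms π π' \ {e}) ≠ π' := by
  obtain ⟨c, hc, rfl⟩ := he
  have hrep_eq_of_hub : ∀ d, π (π.rep (π'.rep d)) c → π'.rep d = π'.rep c := fun d hdc =>
    Setoid.rep_eq_rep_iff.2 (π'.trans' (π'.rel_rep d) (h (π.trans' (π.rel_rep _) hdc)))
  have hhub : ¬ π (π.rep (π'.rep c)) c := fun hcc => hc <| by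
    simpa only [Setoid.rep_rep] using (Setoid.rep_eq_rep_iff.2 hcc).symm
  -- The class of `c` is not crossed by `π` nor by the remaining atoms, but `π'` leaves it.
  have hcut : π ⊔ sSup (bridgeAtoms π π' \ {pairSetoid (π.rep c) (π.rep (π'.rep c))}) ≤
      Setoid.ker fun w => π w c := by
    refine sup_le (fun w w' hww' => Setoid.ker_def.2 (propext ⟨?_, ?_⟩)) (sSup_le ?_)
    · exact π.trans' (π.symm' hww')
    · exact π.trans' hww'
    · rintro _ ⟨⟨d, -, rfl⟩, hne⟩
      refine pairSetoid_le_ker_iff.2 (propext (iff_of_false (fun hdc => hne ?_) fun hdc => ?_))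
      · have hπ' : π'.rep d = π'.rep c := Setoid.rep_eq_rep_iff.2 (h (π.trans' (π.rel_rep d) hdc))
        have hπ : π.rep d = π.rep c := by
          simpa only [Setoid.rep_rep] using Setoid.rep_eq_rep_iff.2 hdc
        rw [hπ, hπ']
        rfl
      · exact hhub (hrep_eq_of_hub d hdc ▸ hdc)
  intro hsup
  rw [hsup] at hcut
  have hrel : π' c (π.rep (π'.rep c)) := π'.trans' (π'.rel_rep c) (h (π.rel_rep _))
  exact hhub (Iff.of_eq (Setoid.ker_def.1 (hcut hrel)) |>.1 (π.refl' c))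

theorem IsAtomicDecomp.disjoint_bridgeAtoms {S : Set (Setoid α)} (hS : IsAtomicDecomp π S) :
    Disjoint S (bridgeAtoms π π') :=
  Set.disjoint_left.2 fun _ hs he => not_le_of_mem_bridgeAtoms he (hS.le hs)

theorem IsMinAtomicDecomp.union_bridgeAtoms {S : Set (Setoid α)} (h : π ≤ π')
    (hS : IsMinAtomicDecomp π S) : IsMinAtomicDecomp π' (S ∪ bridgeAtoms π π') := by
  rw [isMinAtomicDecomp_iff] at hS ⊢
  obtain ⟨hdec, hmin⟩ := hS
  have hdisj := hdec.disjoint_bridgeAtoms (π' := π')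
  refine ⟨⟨?_, by rw [sSup_union, hdec.2, sup_sSup_bridgeAtoms h]⟩, ?_⟩
  · rintro a (ha | ha)
    exacts [hdec.1 a ha, isAtom_of_mem_bridgeAtoms ha]
  rintro s (hs | hs) hsup <;> rw [Set.union_sdiff_distrib, sSup_union] at hsup
  · rw [Set.sdiff_singleton_eq_self (hdisj.notMem_of_mem_left hs)] at hsup
    refine hmin s hs (eq_of_le_sup_sSup_of_pairs_in_transversal (R := Set.range π.rep)
      (fun a ha b hb => Setoid.eq_of_rel_of_mem_range_rep ha hb) ?_
      (hdec.2 ▸ sSup_le_sSup Set.sdiff_subset) (hsup ▸ h))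
    rintro _ ⟨d, -, rfl⟩
    exact ⟨_, Set.mem_range_self d, _, Set.mem_range_self _, rfl⟩
  · rw [Set.sdiff_singleton_eq_self (hdisj.notMem_of_mem_right hs), hdec.2] at hsup
    exact sup_sSup_bridgeAtoms_diff_ne h hs hsup

end Bridge

end General

/-- `𝔑` is monotone on the partition lattice. -/
theorem numMinDecomp_monotone (π π' : Setoid X) (h : π ≤ π') :
    numMinDecomp π ≤ numMinDecomp π' := by
  set E := bridgeAtoms π π'
  refine Set.ncard_le_ncard_of_injOn (· ∪ E)
    (fun S hS => IsMinAtomicDecomp.union_bridgeAtoms h hS) (fun S₁ hS₁ S₂ hS₂ heq => ?_)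
    (Set.toFinite _)
  calc S₁ = (S₁ ∪ E) \ E := hS₁.1.disjoint_bridgeAtoms.sup_sdiff_cancel_right.symm
    _ = (S₂ ∪ E) \ E := congrArg (· \ E) heq
    _ = S₂ := hS₂.1.disjoint_bridgeAtoms.sup_sdiff_cancel_right
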